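/- The sorting map on ℝⁿ, sending a vector to its nondecreasing rearrangement, is 1-Lipschitz with respect to the Euclidean norm: for all x, y ∈ ℝⁿ, ‖sort(x) − sort(y)‖₂ ≤ ‖x − y‖₂. -/

import Mathlib

/-!
Sorting both vectors aligns them monotonically, which by the rearrangement inequality maximises
`∑ xᵢ yᵢ` over all relative permutations; since `‖x‖` and `‖y‖` are permutation invariant,
`‖x - y‖² = ‖x‖² - 2 ∑ xᵢ yᵢ + ‖y‖²` is then minimised.
-/

open Finset

theorem Finset.sum_sub_sq {ι α : Type*} [CommRing α] (s : Finset ι) (f g : ι → α) :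
    ∑ i ∈ s, (f i - g i) ^ 2 = ∑ i ∈ s, f i ^ 2 - 2 * ∑ i ∈ s, f i * g i + ∑ i ∈ s, g i ^ 2 := by
  simp only [sub_sq, sum_add_distrib, sum_sub_distrib, mul_sum, mul_assoc]

theorem Monovary.sum_sub_sq_le_sum_sub_comp_perm_sq {ι α : Type*} [Fintype ι] [CommRing α]
    [LinearOrder α] [IsStrictOrderedRing α] {f g : ι → α} (hfg : Monovary f g)
    (σ : Equiv.Perm ι) :
    ∑ i, (f i - g i) ^ 2 ≤ ∑ i, (f i - g (σ i)) ^ 2 := by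
  have hperm : ∑ i, g (σ i) ^ 2 = ∑ i, g i ^ 2 := Equiv.sum_comp σ (fun i => g i ^ 2)
  rw [sum_sub_sq, sum_sub_sq, hperm]
  linarith [hfg.sum_mul_comp_perm_le_sum_mul (σ := σ)]

/-- The sorting map (nondecreasing rearrangement) on `ℝⁿ` is 1-Lipschitz for the
Euclidean norm: if `xs` and `ys` are the sorted rearrangements of `x` and `y`, then
`‖xs - ys‖₂ ≤ ‖x - y‖₂`. -/
theorem sort_one_lipschitz_euclidean
    (n : ℕ) (x y xs ys : Fin n → ℝ) (σ τ : Equiv.Perm (Fin n))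
    (hxs : xs = x ∘ σ) (hys : ys = y ∘ τ)
    (hxsmono : Monotone xs) (hysmono : Monotone ys) :
    Real.sqrt (∑ i : Fin n, (xs i - ys i) ^ 2) ≤
      Real.sqrt (∑ i : Fin n, (x i - y i) ^ 2) := by
  apply Real.sqrt_le_sqrt
  calc ∑ i, (xs i - ys i) ^ 2
      ≤ ∑ i, (xs i - ys ((σ.trans τ.symm) i)) ^ 2 :=
        (hxsmono.monovary hysmono).sum_sub_sq_le_sum_sub_comp_perm_sq _
    _ = ∑ i, (x (σ i) - y (σ i)) ^ 2 := by simp [hxs, hys]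
    _ = ∑ i, (x i - y i) ^ 2 := Equiv.sum_comp σ (fun i => (x i - y i) ^ 2)
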